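/- arXiv:2002.09659 — 3 statements merged into one kernel-verified Lean document; each statement's English description precedes it below -/
import Mathlib

section
/- Assume in addition that Q is square integrable. Then the pseudo-conformal blow-up solution S_T satisfies, for all t < T and x ∈ ℝ^d, the equation i ∂ₜS_T(t,x) + ΔS_T(t,x) + |S_T(t,x)|^{4/d} S_T(t,x) = 0, and moreover ∫_{ℝ^d} |S_T(t,x)|² dx = ∫_{ℝ^d} Q(x)² dx for every t < T. -/
set_option maxHeartbeats 1000000


noncomputable section

open MeasureTheory Complex

/-- Partial derivative of a real-valued function on `ℝ^d` in the `i`-th coordinate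
direction. -/
def pd {d : ℕ} (f : EuclideanSpace ℝ (Fin d) → ℝ) (i : Fin d)
    (x : EuclideanSpace ℝ (Fin d)) : ℝ :=
  fderiv ℝ f x (EuclideanSpace.single i 1)

/-- Laplacian of a real-valued function on `ℝ^d`. -/
def lap {d : ℕ} (f : EuclideanSpace ℝ (Fin d) → ℝ)
    (x : EuclideanSpace ℝ (Fin d)) : ℝ :=
  ∑ i, pd (pd f i) i x

/-- Partial derivative of a complex-valued function on `ℝ^d` in the `i`-th coordinate
direction. -/
def pdC {d : ℕ} (f : EuclideanSpace ℝ (Fin d) → ℂ) (i : Fin d)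
    (x : EuclideanSpace ℝ (Fin d)) : ℂ :=
  fderiv ℝ f x (EuclideanSpace.single i 1)

/-- Laplacian of a complex-valued function on `ℝ^d`. -/
def lapC {d : ℕ} (f : EuclideanSpace ℝ (Fin d) → ℂ)
    (x : EuclideanSpace ℝ (Fin d)) : ℂ :=
  ∑ i, pdC (pdC f i) i x

/-- The pseudo-conformal blow-up profile
`S_T(t,x) = (T−t)^{−d/2} Q(x/(T−t)) exp(i/(T−t) − i|x|²/(4(T−t)))`. -/
def STprof {d : ℕ} (Q : EuclideanSpace ℝ (Fin d) → ℝ) (T t : ℝ)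
    (x : EuclideanSpace ℝ (Fin d)) : ℂ :=
  (((T - t) ^ (-(d : ℝ) / 2) : ℝ) : ℂ) * (Q ((T - t)⁻¹ • x) : ℂ) *
    Complex.exp (Complex.I * ((1 / (T - t) - ‖x‖ ^ 2 / (4 * (T - t)) : ℝ) : ℂ))

lemma sum_single {d : ℕ} (x : EuclideanSpace ℝ (Fin d)) :
    ∑ i, x i • EuclideanSpace.single i (1:ℝ) = x := by
  ext j
  have : (∑ i, x i • EuclideanSpace.single i (1:ℝ)) j
      = ∑ i, (x i • EuclideanSpace.single i (1:ℝ)) j :=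
    by rw [WithLp.ofLp_sum, Finset.sum_apply]
  rw [this]
  simp [EuclideanSpace.single_apply]

lemma fderiv_apply_sum {d : ℕ} (f : EuclideanSpace ℝ (Fin d) → ℝ)
    (y v : EuclideanSpace ℝ (Fin d)) :
    fderiv ℝ f y v = ∑ i, v i * pd f i y := by
  conv_lhs => rw [← sum_single v]
  rw [map_sum]
  simp [pd, smul_eq_mul]

lemma norm_sq_eq_sum {d : ℕ} (x : EuclideanSpace ℝ (Fin d)) :
    ‖x‖ ^ 2 = ∑ i, (x i) ^ 2 := by
  rw [EuclideanSpace.norm_eq, Real.sq_sqrt (by positivity)]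
  simp [sq_abs]


-- scaled composition
lemma hasFDerivAt_scaled {d : ℕ} {Q : EuclideanSpace ℝ (Fin d) → ℝ}
    (hQ : ContDiff ℝ (⊤ : ℕ∞) Q) (l : ℝ) (x : EuclideanSpace ℝ (Fin d)) :
    HasFDerivAt (fun x : EuclideanSpace ℝ (Fin d) => Q (l⁻¹ • x))
      (l⁻¹ • fderiv ℝ Q (l⁻¹ • x)) x := by
  have h1 : HasFDerivAt (fun x : EuclideanSpace ℝ (Fin d) => l⁻¹ • x)
      (l⁻¹ • ContinuousLinearMap.id ℝ (EuclideanSpace ℝ (Fin d))) x :=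
    (hasFDerivAt_id x).const_smul l⁻¹
  have h2 := (hQ.differentiable (by simp) (l⁻¹ • x)).hasFDerivAt
  have h3 := h2.comp x h1
  have h4 : l⁻¹ • fderiv ℝ Q (l⁻¹ • x)
      = (fderiv ℝ Q (l⁻¹ • x)).comp (l⁻¹ • ContinuousLinearMap.id ℝ (EuclideanSpace ℝ (Fin d))) := by
    ext v
    simp [ContinuousLinearMap.smul_apply]
  rw [h4]
  exact h3

-- phase function derivative
lemma hasFDerivAt_phase {d : ℕ} (l : ℝ) (x : EuclideanSpace ℝ (Fin d)) :
    HasFDerivAt (fun x : EuclideanSpace ℝ (Fin d) => (1/l - ‖x‖^2/(4*l) : ℝ))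
      ((-(4*l)⁻¹ : ℝ) • (2 • (innerSL ℝ x))) x := by
  have h1 : HasFDerivAt (fun x : EuclideanSpace ℝ (Fin d) => ‖x‖^2)
      (2 • (innerSL ℝ x)) x := (hasStrictFDerivAt_norm_sq x).hasFDerivAt
  have h2 := (h1.mul_const ((4*l)⁻¹)).const_sub (1/l)
  have heq : (fun x : EuclideanSpace ℝ (Fin d) => (1/l - ‖x‖^2/(4*l) : ℝ))
      = fun x : EuclideanSpace ℝ (Fin d) => 1/l - ‖x‖^2 * (4*l)⁻¹ := by
    funext z; ring
  rw [heq, neg_smul]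
  exact h2

lemma pdC_S {d : ℕ} {Q : EuclideanSpace ℝ (Fin d) → ℝ} (hQ : ContDiff ℝ (⊤ : ℕ∞) Q)
    (l : ℝ) (i : Fin d) (x : EuclideanSpace ℝ (Fin d)) :
    pdC (fun x => (↑(l ^ (-(d:ℝ)/2)) : ℂ) * ↑(Q (l⁻¹ • x)) *
      Complex.exp (I * ↑(1/l - ‖x‖^2/(4*l) : ℝ))) i x
    = (↑(l ^ (-(d:ℝ)/2)) : ℂ) * Complex.exp (I * ↑(1/l - ‖x‖^2/(4*l) : ℝ)) *
      (↑(l⁻¹ * pd Q i (l⁻¹ • x)) + ↑(Q (l⁻¹ • x)) * I * ↑(-(x i)/(2*l))) := by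
  set c : ℝ := l ^ (-(d:ℝ)/2) with hc
  set y := l⁻¹ • x with hy
  have hq := hasFDerivAt_scaled hQ l x
  have hqC : HasFDerivAt (fun x : EuclideanSpace ℝ (Fin d) => (↑(Q (l⁻¹ • x)) : ℂ))
      (Complex.ofRealCLM.comp (l⁻¹ • fderiv ℝ Q y)) x :=
    Complex.ofRealCLM.hasFDerivAt.comp x hq
  have hψ := hasFDerivAt_phase l x
  have hψC : HasFDerivAt (fun x : EuclideanSpace ℝ (Fin d) => ((1/l - ‖x‖^2/(4*l) : ℝ) : ℂ))
      (Complex.ofRealCLM.comp ((-(4*l)⁻¹ : ℝ) • (2 • (innerSL ℝ x)))) x :=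
    Complex.ofRealCLM.hasFDerivAt.comp x hψ
  have hexp := (hψC.const_mul I).cexp
  have hcq := hqC.const_mul (c : ℂ)
  have hS := hcq.mul hexp
  rw [pdC]; erw [hS.fderiv]
  simp only [ContinuousLinearMap.add_apply, ContinuousLinearMap.coe_smul',
    Pi.smul_apply, ContinuousLinearMap.comp_apply, Complex.ofRealCLM_apply,
    ContinuousLinearMap.smul_apply, innerSL_apply_apply]
  have hinner : (inner ℝ x (EuclideanSpace.single i (1:ℝ)) : ℝ) = x i := by
    simp [EuclideanSpace.inner_single_right]
  have hfQ : (fderiv ℝ Q y) (EuclideanSpace.single i (1:ℝ)) = pd Q i y := rfl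
  rw [hinner, hfQ]
  simp only [smul_eq_mul]
  push_cast
  ring

lemma contDiff_pd {d : ℕ} {Q : EuclideanSpace ℝ (Fin d) → ℝ} (hQ : ContDiff ℝ (⊤ : ℕ∞) Q)
    (i : Fin d) : ContDiff ℝ (⊤ : ℕ∞) (pd Q i) := by
  have h := hQ.fderiv_right (m := (⊤ : ℕ∞)) (by simp)
  exact h.clm_apply contDiff_const

lemma pdC_F {d : ℕ} {Q : EuclideanSpace ℝ (Fin d) → ℝ} (hQ : ContDiff ℝ (⊤ : ℕ∞) Q)
    (l : ℝ) (i : Fin d) (x : EuclideanSpace ℝ (Fin d)) :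
    pdC (fun x => (↑(l ^ (-(d:ℝ)/2)) : ℂ) * Complex.exp (I * ↑(1/l - ‖x‖^2/(4*l) : ℝ)) *
      ((↑l)⁻¹ * ↑(pd Q i (l⁻¹ • x)) - ↑(Q (l⁻¹ • x)) * I * ↑(x i) * (2*(↑l:ℂ))⁻¹)) i x
    = (↑(l ^ (-(d:ℝ)/2)) : ℂ) * Complex.exp (I * ↑(1/l - ‖x‖^2/(4*l) : ℝ)) *
      ( ↑(pd (pd Q i) i (l⁻¹ • x)) * ((↑l:ℂ)⁻¹ * (↑l)⁻¹)
        - I * (↑(x i) * ↑(pd Q i (l⁻¹ • x))) * ((↑l:ℂ)⁻¹ * (↑l)⁻¹)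
        - ↑(Q (l⁻¹ • x)) * (↑(x i):ℂ)^2 * ((↑l:ℂ)⁻¹ * (↑l)⁻¹) / 4
        - I * ↑(Q (l⁻¹ • x)) * (↑l:ℂ)⁻¹ / 2 ) := by
  set c : ℝ := l ^ (-(d:ℝ)/2) with hc
  set y := l⁻¹ • x with hy
  have hpdQ := contDiff_pd hQ i
  have hq := hasFDerivAt_scaled hQ l x
  have hqC : HasFDerivAt (fun x : EuclideanSpace ℝ (Fin d) => (↑(Q (l⁻¹ • x)) : ℂ))
      (Complex.ofRealCLM.comp (l⁻¹ • fderiv ℝ Q y)) x :=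
    Complex.ofRealCLM.hasFDerivAt.comp x hq
  have hpd := hasFDerivAt_scaled hpdQ l x
  have hpdC : HasFDerivAt (fun x : EuclideanSpace ℝ (Fin d) => (↑(pd Q i (l⁻¹ • x)) : ℂ))
      (Complex.ofRealCLM.comp (l⁻¹ • fderiv ℝ (pd Q i) y)) x :=
    Complex.ofRealCLM.hasFDerivAt.comp x hpd
  have ha := hpdC.const_mul ((↑l : ℂ)⁻¹)
  have hxi : HasFDerivAt (fun x : EuclideanSpace ℝ (Fin d) => (↑(x i) : ℂ))
      (Complex.ofRealCLM.comp (EuclideanSpace.proj i)) x :=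
    (Complex.ofRealCLM.comp (EuclideanSpace.proj (𝕜 := ℝ) i)).hasFDerivAt
  have hb := (((hqC.mul_const I).mul hxi).mul_const ((2*(↑l:ℂ))⁻¹))
  have hG := ha.sub hb
  have hψ := hasFDerivAt_phase l x
  have hψC : HasFDerivAt (fun x : EuclideanSpace ℝ (Fin d) => ((1/l - ‖x‖^2/(4*l) : ℝ) : ℂ))
      (Complex.ofRealCLM.comp ((-(4*l)⁻¹ : ℝ) • (2 • (innerSL ℝ x)))) x :=
    Complex.ofRealCLM.hasFDerivAt.comp x hψ
  have hexp := (hψC.const_mul I).cexp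
  have hcE := hexp.const_mul (↑c : ℂ)
  have hF := hcE.mul hG
  rw [pdC]; erw [hF.fderiv]
  simp only [ContinuousLinearMap.add_apply, ContinuousLinearMap.coe_smul',
    Pi.smul_apply, ContinuousLinearMap.comp_apply, Complex.ofRealCLM_apply,
    ContinuousLinearMap.smul_apply, ContinuousLinearMap.sub_apply, ContinuousLinearMap.coe_sub',
    Pi.sub_apply, Pi.mul_apply]
  have hinner : ((innerSL ℝ) x) (EuclideanSpace.single i (1:ℝ)) = x i := by
    simp [EuclideanSpace.inner_single_right]
  have hfQ : (fderiv ℝ Q y) (EuclideanSpace.single i (1:ℝ)) = pd Q i y := rfl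
  have hfpd : (fderiv ℝ (pd Q i) y) (EuclideanSpace.single i (1:ℝ)) = pd (pd Q i) i y := rfl
  have hproj : (EuclideanSpace.proj (𝕜 := ℝ) i) (EuclideanSpace.single i (1:ℝ)) = 1 := by
    simp
  rw [hinner, hfQ, hfpd, hproj]
  simp only [smul_eq_mul]
  push_cast
  ring_nf
  rw [Complex.I_sq]
  ring

lemma lapC_S {d : ℕ} {Q : EuclideanSpace ℝ (Fin d) → ℝ} (hQ : ContDiff ℝ (⊤ : ℕ∞) Q)
    (l : ℝ) (x : EuclideanSpace ℝ (Fin d)) :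
    lapC (fun x => (↑(l ^ (-(d:ℝ)/2)) : ℂ) * ↑(Q (l⁻¹ • x)) *
      Complex.exp (I * ↑(1/l - ‖x‖^2/(4*l) : ℝ))) x
    = (↑(l ^ (-(d:ℝ)/2)) : ℂ) * Complex.exp (I * ↑(1/l - ‖x‖^2/(4*l) : ℝ)) *
      ( ↑(lap Q (l⁻¹ • x)) * ((↑l:ℂ)⁻¹ * (↑l)⁻¹)
        - I * ↑(fderiv ℝ Q (l⁻¹ • x) x) * ((↑l:ℂ)⁻¹ * (↑l)⁻¹)
        - ↑(Q (l⁻¹ • x)) * ↑(‖x‖^2 : ℝ) * ((↑l:ℂ)⁻¹ * (↑l)⁻¹) / 4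
        - I * ↑(Q (l⁻¹ • x)) * (↑d) * (↑l:ℂ)⁻¹ / 2 ) := by
  set c : ℝ := l ^ (-(d:ℝ)/2) with hc
  set y := l⁻¹ • x with hy
  have hfun : ∀ i : Fin d,
      pdC (fun x => (↑c : ℂ) * ↑(Q (l⁻¹ • x)) *
        Complex.exp (I * ↑(1/l - ‖x‖^2/(4*l) : ℝ))) i
      = fun z => (↑c : ℂ) * Complex.exp (I * ↑(1/l - ‖z‖^2/(4*l) : ℝ)) *
        ((↑l)⁻¹ * ↑(pd Q i (l⁻¹ • z)) - ↑(Q (l⁻¹ • z)) * I * ↑(z i) * (2*(↑l:ℂ))⁻¹) := by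
    intro i
    funext z
    rw [pdC_S hQ l i z]
    push_cast
    ring
  rw [lapC]
  have hstep : ∀ i : Fin d,
      pdC (pdC (fun x => (↑c : ℂ) * ↑(Q (l⁻¹ • x)) *
        Complex.exp (I * ↑(1/l - ‖x‖^2/(4*l) : ℝ))) i) i x
      = (↑c : ℂ) * Complex.exp (I * ↑(1/l - ‖x‖^2/(4*l) : ℝ)) *
        ( ↑(pd (pd Q i) i y) * ((↑l:ℂ)⁻¹ * (↑l)⁻¹)
          - I * (↑(x i) * ↑(pd Q i y)) * ((↑l:ℂ)⁻¹ * (↑l)⁻¹)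
          - ↑(Q y) * (↑(x i):ℂ)^2 * ((↑l:ℂ)⁻¹ * (↑l)⁻¹) / 4
          - I * ↑(Q y) * (↑l:ℂ)⁻¹ / 2 ) := by
    intro i
    rw [hfun i]
    exact pdC_F hQ l i x
  rw [Finset.sum_congr rfl (fun i _ => hstep i)]
  rw [← Finset.mul_sum]
  congr 1
  have hsplit : ∀ (f g h k : Fin d → ℂ),
      ∑ i, (f i - g i - h i - k i) = (∑ i, f i) - (∑ i, g i) - (∑ i, h i) - (∑ i, k i) := by
    intro f g h k
    simp [Finset.sum_sub_distrib]
  rw [hsplit]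
  have hlap : (↑(lap Q y) : ℂ) = ∑ i, (↑(pd (pd Q i) i y) : ℂ) := by
    rw [lap]; push_cast; rfl
  have hfd : (↑(fderiv ℝ Q y x) : ℂ) = ∑ i, (↑(x i) : ℂ) * ↑(pd Q i y) := by
    rw [fderiv_apply_sum]; push_cast; rfl
  have hnx : (↑(‖x‖^2 : ℝ) : ℂ) = ∑ i, (↑(x i) : ℂ)^2 := by
    rw [norm_sq_eq_sum]; push_cast; rfl
  have e1 : (↑(lap Q y) : ℂ) * ((↑l:ℂ)⁻¹ * (↑l)⁻¹)
      = ∑ i, (↑(pd (pd Q i) i y) : ℂ) * ((↑l:ℂ)⁻¹ * (↑l)⁻¹) := by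
    rw [hlap, Finset.sum_mul]
  have e2 : I * (↑(fderiv ℝ Q y x) : ℂ) * ((↑l:ℂ)⁻¹ * (↑l)⁻¹)
      = ∑ i, I * ((↑(x i) : ℂ) * ↑(pd Q i y)) * ((↑l:ℂ)⁻¹ * (↑l)⁻¹) := by
    rw [hfd, Finset.mul_sum, Finset.sum_mul]
  have e3 : (↑(Q y) : ℂ) * ↑(‖x‖^2 : ℝ) * ((↑l:ℂ)⁻¹ * (↑l)⁻¹) / 4
      = ∑ i, (↑(Q y) : ℂ) * (↑(x i) : ℂ)^2 * ((↑l:ℂ)⁻¹ * (↑l)⁻¹) / 4 := by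
    rw [hnx, Finset.mul_sum, Finset.sum_mul, Finset.sum_div]
  have e4 : I * (↑(Q y) : ℂ) * (↑d : ℂ) * (↑l:ℂ)⁻¹ / 2
      = ∑ _i : Fin d, I * (↑(Q y) : ℂ) * (↑l:ℂ)⁻¹ / 2 := by
    rw [Finset.sum_const, Finset.card_univ, Fintype.card_fin, nsmul_eq_mul]
    ring
  rw [e1, e2, e3, e4]

lemma deriv_S {d : ℕ} {Q : EuclideanSpace ℝ (Fin d) → ℝ} (hQ : ContDiff ℝ (⊤ : ℕ∞) Q)
    {T t : ℝ} (ht : t < T) (x : EuclideanSpace ℝ (Fin d)) :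
    deriv (fun s => STprof Q T s x) t
    = Complex.exp (I * ((1/(T-t) - ‖x‖^2/(4*(T-t)) : ℝ) : ℂ)) *
      ( ↑((d:ℝ)/2) * ↑((T-t) ^ (-(d:ℝ)/2 - 1)) * ↑(Q ((T-t)⁻¹ • x))
        + ↑((T-t) ^ (-(d:ℝ)/2)) * ↑(fderiv ℝ Q ((T-t)⁻¹ • x) x) * (((T-t:ℝ):ℂ)⁻¹ * ((T-t:ℝ):ℂ)⁻¹)
        + ↑((T-t) ^ (-(d:ℝ)/2)) * ↑(Q ((T-t)⁻¹ • x)) * I * (((T-t:ℝ):ℂ)⁻¹ * ((T-t:ℝ):ℂ)⁻¹)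
            * (1 - (↑(‖x‖^2 : ℝ) : ℂ)/4) ) := by
  have hl : (0:ℝ) < T - t := sub_pos.2 ht
  have hlne : T - t ≠ 0 := ne_of_gt hl
  have hsub : HasDerivAt (fun s : ℝ => T - s) (-1) t := by
    simpa using (hasDerivAt_id t).const_sub T
  have h1 : HasDerivAt (fun s : ℝ => ((T - s) ^ (-(d:ℝ)/2) : ℝ))
      ((-(d:ℝ)/2) * (T-t) ^ (-(d:ℝ)/2 - 1) * (-1)) t :=
    (Real.hasDerivAt_rpow_const (p := -(d:ℝ)/2) (Or.inl hlne)).comp t hsub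
  have h1C := h1.ofReal_comp
  have hinv : HasDerivAt (fun s : ℝ => (T - s)⁻¹) (-(-1)/(T-t)^2) t := hsub.inv hlne
  have hpath : HasDerivAt (fun s : ℝ => (T - s)⁻¹ • x) ((-(-1)/(T-t)^2) • x) t :=
    hinv.smul_const x
  have hQd : HasDerivAt (fun s : ℝ => Q ((T - s)⁻¹ • x))
      (fderiv ℝ Q ((T-t)⁻¹ • x) ((-(-1)/(T-t)^2) • x)) t :=
    HasFDerivAt.comp_hasDerivAt t
      ((hQ.differentiable (by simp) ((T-t)⁻¹ • x)).hasFDerivAt) hpath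
  have hQdC := hQd.ofReal_comp
  have ha : HasDerivAt (fun s : ℝ => 1/(T - s)) (-(-1)/(T-t)^2) t := by
    simpa [one_div] using hinv
  have hden : HasDerivAt (fun s : ℝ => 4 * (T - s)) (4 * (-1)) t := hsub.const_mul 4
  have hbinv : HasDerivAt (fun s : ℝ => (4 * (T - s))⁻¹)
      (-(4 * (-1))/(4 * (T-t))^2) t := hden.inv (by positivity)
  have hb : HasDerivAt (fun s : ℝ => ‖x‖^2 / (4 * (T - s)))
      (‖x‖^2 * (-(4 * (-1))/(4 * (T-t))^2)) t := by
    simpa [div_eq_mul_inv] using hbinv.const_mul (‖x‖^2)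
  have hφ := (ha.sub hb).ofReal_comp
  have hexp := (hφ.const_mul I).cexp
  have hAB := h1C.mul hQdC
  have hS := hAB.mul hexp
  rw [show (fun s => STprof Q T s x)
      = fun s => (((T - s) ^ (-(d : ℝ) / 2) : ℝ) : ℂ) * (Q ((T - s)⁻¹ • x) : ℂ) *
        Complex.exp (Complex.I * ((1 / (T - s) - ‖x‖ ^ 2 / (4 * (T - s)) : ℝ) : ℂ)) from rfl]
  erw [hS.deriv]
  simp only [Pi.sub_apply, Pi.mul_apply]
  have hfd : (fderiv ℝ Q ((T-t)⁻¹ • x)) ((-(-1)/(T-t)^2) • x)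
      = (-(-1)/(T-t)^2) * (fderiv ℝ Q ((T-t)⁻¹ • x)) x := by
    rw [ContinuousLinearMap.map_smul]; rfl
  rw [hfd]
  obtain ⟨u, hu⟩ : ∃ u, T - t = u := ⟨_, rfl⟩
  rw [hu]
  have hune : u ≠ 0 := hu ▸ hlne
  have huC : ((u:ℝ):ℂ) ≠ 0 := Complex.ofReal_ne_zero.mpr hune
  push_cast
  field_simp

lemma abs_S {d : ℕ} {Q : EuclideanSpace ℝ (Fin d) → ℝ} (hQpos : ∀ x, 0 < Q x)
    {T t : ℝ} (ht : t < T) (x : EuclideanSpace ℝ (Fin d)) :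
    ‖STprof Q T t x‖
      = (T-t) ^ (-(d:ℝ)/2) * Q ((T-t)⁻¹ • x) := by
  have hl : (0:ℝ) < T - t := sub_pos.2 ht
  rw [STprof, norm_mul, norm_mul, Complex.norm_real, Complex.norm_real, Real.norm_eq_abs,
    Real.norm_eq_abs, Complex.norm_exp]
  have hre : (Complex.I * ((1/(T-t) - ‖x‖^2/(4*(T-t)) : ℝ):ℂ)).re = 0 := by
    rw [Complex.mul_re, Complex.I_re, Complex.I_im, Complex.ofReal_re, Complex.ofReal_im]
    ring
  rw [hre, Real.exp_zero, abs_of_pos (Real.rpow_pos_of_pos hl _), abs_of_pos (hQpos _),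
    mul_one]

/-- the pseudo-conformal blow-up solution `S_T` solves the focusing
mass-critical NLS on `(-∞, T) × ℝ^d` and has constant mass `‖Q‖_{L²}²`. -/
theorem ST_solves_and_mass (d : ℕ) (hd : 1 ≤ d)
    (Q : EuclideanSpace ℝ (Fin d) → ℝ)
    (hQsmooth : ContDiff ℝ (⊤ : ℕ∞) Q) (hQpos : ∀ x, 0 < Q x)
    (hQsol : ∀ x, lap Q x - Q x + Q x ^ ((1 : ℝ) + 4 / d) = 0)
    (hQint : Integrable (fun x : EuclideanSpace ℝ (Fin d) => Q x ^ 2))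
    (T : ℝ) :
    (∀ t < T, ∀ x : EuclideanSpace ℝ (Fin d),
      Complex.I * deriv (fun s => STprof Q T s x) t + lapC (STprof Q T t) x
        + ((‖STprof Q T t x‖ ^ ((4 : ℝ) / d) : ℝ) : ℂ) * STprof Q T t x = 0) ∧
    (∀ t < T,
      ∫ x : EuclideanSpace ℝ (Fin d), ‖STprof Q T t x‖ ^ 2
        = ∫ x : EuclideanSpace ℝ (Fin d), Q x ^ 2) := by
  have hdR : (d:ℝ) ≠ 0 := Nat.cast_ne_zero.mpr (by omega)
  constructor
  · intro t ht x
    have hl : (0:ℝ) < T - t := sub_pos.2 ht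
    have hlne : T - t ≠ 0 := ne_of_gt hl
    have hSfun : STprof Q T t = fun x : EuclideanSpace ℝ (Fin d) =>
        (↑((T-t) ^ (-(d:ℝ)/2)) : ℂ) * ↑(Q ((T-t)⁻¹ • x)) *
        Complex.exp (I * ((1/(T-t) - ‖x‖^2/(4*(T-t)) : ℝ) : ℂ)) := rfl
    rw [abs_S hQpos ht x, deriv_S hQsmooth ht x]
    simp only [hSfun]
    rw [lapC_S hQsmooth (T-t) x]
    have hy := hQsol ((T-t)⁻¹ • x)
    have hlapval : lap Q ((T-t)⁻¹ • x)
        = Q ((T-t)⁻¹ • x) - Q ((T-t)⁻¹ • x) ^ ((1:ℝ) + 4/(d:ℝ)) := by linarith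
    have hqpow : Q ((T-t)⁻¹ • x) ^ ((1:ℝ) + 4/(d:ℝ))
        = Q ((T-t)⁻¹ • x) * Q ((T-t)⁻¹ • x) ^ ((4:ℝ)/d) := by
      rw [Real.rpow_add (hQpos _), Real.rpow_one]
    have hrp1 : (T-t) ^ (-(d:ℝ)/2 - 1) = (T-t) ^ (-(d:ℝ)/2) / (T-t) := by
      rw [Real.rpow_sub hl, Real.rpow_one]
    have hexp2 : (-(d:ℝ)/2) * ((4:ℝ)/d) = -2 := by
      field_simp
      ring
    have hNred : ((T-t) ^ (-(d:ℝ)/2) * Q ((T-t)⁻¹ • x)) ^ ((4:ℝ)/d)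
        = ((T-t)^2)⁻¹ * Q ((T-t)⁻¹ • x) ^ ((4:ℝ)/d) := by
      rw [Real.mul_rpow (Real.rpow_pos_of_pos hl _).le (hQpos _).le,
        ← Real.rpow_mul hl.le, hexp2]
      congr 1
      rw [show ((-2):ℝ) = ((-2:ℤ):ℝ) by norm_num, Real.rpow_intCast]
      simp [zpow_neg]
    rw [hlapval, hqpow, hrp1, hNred]
    obtain ⟨u, hu⟩ : ∃ u, T - t = u := ⟨_, rfl⟩
    rw [hu]
    have hu0 : (0:ℝ) < u := hu ▸ hl
    have hune : u ≠ 0 := ne_of_gt hu0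
    have huC : ((u:ℝ):ℂ) ≠ 0 := Complex.ofReal_ne_zero.mpr hune
    set E := Complex.exp (I * ((1 / u - ‖x‖ ^ 2 / (4 * u) : ℝ) : ℂ)) with hE
    push_cast
    field_simp
    ring_nf
    simp only [Complex.I_sq, inv_pow, ← pow_add]
    field_simp
    ring_nf
  · intro t ht
    have hl : (0:ℝ) < T - t := sub_pos.2 ht
    have h1 : ∀ x : EuclideanSpace ℝ (Fin d),
        ‖STprof Q T t x‖ ^ 2
          = ((T-t) ^ (-(d:ℝ)/2))^2 * (fun y => Q y ^ 2) ((T-t)⁻¹ • x) := by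
      intro x
      rw [abs_S hQpos ht x]
      simp only [mul_pow]
    rw [integral_congr_ae (Filter.Eventually.of_forall h1)]
    rw [MeasureTheory.integral_const_mul]
    rw [MeasureTheory.Measure.integral_comp_smul volume (fun y => Q y ^ 2) ((T-t)⁻¹)]
    rw [finrank_euclideanSpace_fin, smul_eq_mul, ← mul_assoc]
    have hcoef : ((T - t) ^ (-(d:ℝ)/2))^2 * |(((T-t)⁻¹ ^ d)⁻¹ : ℝ)| = 1 := by
      rw [← inv_pow, inv_inv, abs_of_pos (pow_pos hl d)]
      rw [← Real.rpow_natCast ((T - t) ^ (-(d:ℝ)/2)) 2, ← Real.rpow_natCast (T-t) d,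
        ← Real.rpow_mul hl.le, ← Real.rpow_add hl]
      norm_num
    rw [hcoef, one_mul]
end
end

section
/- Assume in addition that ∇Q and x ↦ |x| Q(x) are square integrable. Then for every t < T one has the exact identity ∫_{ℝ^d} |∇S_T(t,x)|² dx = (T−t)^{−2} ∫_{ℝ^d} |∇Q(x)|² dx + (1/4) ∫_{ℝ^d} |x|² Q(x)² dx; in particular (T−t)² ∫ |∇S_T(t,x)|² dx → ∫ |∇Q|² dx as t → T⁻, so S_T blows up in Ḣ¹ at time T with speed (T−t)^{−1}. -/
noncomputable section

open MeasureTheory Complex Filter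
open scoped Topology

lemma pdC_STprof {d : ℕ} (Q : EuclideanSpace ℝ (Fin d) → ℝ) (hQ : ContDiff ℝ (⊤ : ℕ∞) Q)
    (T t : ℝ) (i : Fin d) (x : EuclideanSpace ℝ (Fin d)) :
    pdC (STprof Q T t) i x
      = (((T - t) ^ (-(d : ℝ) / 2) : ℝ) : ℂ)
          * Complex.exp (Complex.I * ((1 / (T - t) - ‖x‖ ^ 2 / (4 * (T - t)) : ℝ) : ℂ))
          * (((T - t)⁻¹ * pd Q i ((T - t)⁻¹ • x) : ℝ)
              - Complex.I * ((x i / (2 * (T - t)) * Q ((T - t)⁻¹ • x) : ℝ) : ℂ)) := by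
  set l := T - t with hl
  have hQd : HasFDerivAt Q (fderiv ℝ Q (l⁻¹ • x)) (l⁻¹ • x) :=
    ((hQ.differentiable (by simp)) (l⁻¹ • x)).hasFDerivAt
  have hsc : HasFDerivAt (fun z : EuclideanSpace ℝ (Fin d) => l⁻¹ • z)
      (l⁻¹ • ContinuousLinearMap.id ℝ (EuclideanSpace ℝ (Fin d))) x := by
    exact (hasFDerivAt_id x).const_smul l⁻¹
  have h1 := hQd.comp x hsc
  have h2 := Complex.ofRealCLM.hasFDerivAt.comp x h1
  have h3 : HasFDerivAt (fun z : EuclideanSpace ℝ (Fin d) => ‖z‖ ^ 2)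
      (2 • (innerSL ℝ x)) x := by
    simpa using (hasFDerivAt_id x).norm_sq
  have h3c : HasFDerivAt (fun z : EuclideanSpace ℝ (Fin d) => ‖z‖ ^ 2 / (4 * l))
      ((4 * l)⁻¹ • (2 • (innerSL ℝ x))) x := by
    refine (h3.const_smul (4 * l)⁻¹).congr_of_eventuallyEq (Filter.Eventually.of_forall fun z => ?_)
    show ‖z‖ ^ 2 / (4 * l) = (4 * l)⁻¹ * ‖z‖ ^ 2
    exact div_eq_inv_mul _ _
  have h4 := (hasFDerivAt_const (1 / l) x).sub h3c
  have h5 := Complex.ofRealCLM.hasFDerivAt.comp x h4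
  have h6 := (h5.const_mul Complex.I).cexp
  have h7 := h2.const_mul ((l ^ (-(d : ℝ) / 2) : ℝ) : ℂ)
  have h8 := h7.mul h6
  have h9 : HasFDerivAt (STprof Q T t) _ x := h8
  rw [pdC, h9.fderiv]
  simp [ContinuousLinearMap.comp_apply, ContinuousLinearMap.smul_apply,
    innerSL_apply_apply, real_inner_comm, EuclideanSpace.inner_single_left, EuclideanSpace.inner_single_right, _root_.map_smul,
    smul_eq_mul, pd, Complex.ofRealCLM_apply]
  ring


lemma abs_sub_I_mul_sq (a b : ℝ) :
    ‖(a : ℂ) - Complex.I * (b : ℂ)‖ ^ 2 = a ^ 2 + b ^ 2 := by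
  rw [Complex.sq_norm, Complex.normSq_apply]
  simp [Complex.sub_re, Complex.sub_im, Complex.mul_re, Complex.mul_im]
  ring

lemma abs_pdC_sq {d : ℕ} (Q : EuclideanSpace ℝ (Fin d) → ℝ) (hQ : ContDiff ℝ (⊤ : ℕ∞) Q)
    {T t : ℝ} (h : 0 < T - t) (i : Fin d) (x : EuclideanSpace ℝ (Fin d)) :
    ‖pdC (STprof Q T t) i x‖ ^ 2
      = ((T - t) ^ d)⁻¹ * (((T - t)⁻¹ * pd Q i ((T - t)⁻¹ • x)) ^ 2
          + (x i / (2 * (T - t)) * Q ((T - t)⁻¹ • x)) ^ 2) := by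
  set l := T - t with hl
  have hA2 : (l ^ (-(d : ℝ) / 2)) ^ 2 = (l ^ d)⁻¹ := by
    rw [← Real.rpow_natCast (l ^ (-(d : ℝ) / 2)) 2, ← Real.rpow_mul h.le,
      ← Real.rpow_natCast l d, ← Real.rpow_neg h.le]
    norm_num
  have hre : (Complex.I * ((1 / l - ‖x‖ ^ 2 / (4 * l) : ℝ) : ℂ)).re = 0 := by
    rw [Complex.mul_re, Complex.I_re, Complex.I_im, Complex.ofReal_im]
    ring
  rw [pdC_STprof Q hQ T t i x, norm_mul, norm_mul, mul_pow, mul_pow, Complex.norm_exp,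
    Complex.norm_real, Real.norm_eq_abs, _root_.abs_of_nonneg (Real.rpow_nonneg h.le _), hA2,
    hre, Real.exp_zero, abs_sub_I_mul_sq]
  ring

lemma sum_abs_pdC {d : ℕ} (Q : EuclideanSpace ℝ (Fin d) → ℝ) (hQ : ContDiff ℝ (⊤ : ℕ∞) Q)
    {T t : ℝ} (h : 0 < T - t) (x : EuclideanSpace ℝ (Fin d)) :
    ∑ i, ‖pdC (STprof Q T t) i x‖ ^ 2
      = ((T - t) ^ d)⁻¹ *
          (((T - t) ^ 2)⁻¹ * (∑ i, pd Q i ((T - t)⁻¹ • x) ^ 2)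
            + (1 / 4) * (‖(T - t)⁻¹ • x‖ ^ 2 * Q ((T - t)⁻¹ • x) ^ 2)) := by
  have hx2 : ∑ i, (x i) ^ 2 = ‖x‖ ^ 2 := by
    rw [EuclideanSpace.norm_eq, Real.sq_sqrt (by positivity)]
    simp [sq_abs]
  have hyx : ‖(T - t)⁻¹ • x‖ ^ 2 = ((T - t) ^ 2)⁻¹ * ‖x‖ ^ 2 := by
    rw [norm_smul]
    rw [Real.norm_eq_abs, _root_.abs_of_nonneg (inv_nonneg.2 h.le), mul_pow, inv_pow]
  calc ∑ i, ‖pdC (STprof Q T t) i x‖ ^ 2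
      = ∑ i, ((T - t) ^ d)⁻¹ * (((T - t)⁻¹ * pd Q i ((T - t)⁻¹ • x)) ^ 2
          + (x i / (2 * (T - t)) * Q ((T - t)⁻¹ • x)) ^ 2) := by
        exact Finset.sum_congr rfl fun i _ => abs_pdC_sq Q hQ h i x
    _ = ((T - t) ^ d)⁻¹ * (((T - t) ^ 2)⁻¹ * (∑ i, pd Q i ((T - t)⁻¹ • x) ^ 2)
          + (Q ((T - t)⁻¹ • x) ^ 2 / (4 * (T - t) ^ 2)) * (∑ i, (x i) ^ 2)) := by
        rw [← Finset.mul_sum]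
        congr 1
        rw [Finset.mul_sum, Finset.mul_sum, ← Finset.sum_add_distrib]
        refine Finset.sum_congr rfl fun i _ => ?_
        field_simp
        ring
    _ = _ := by
        rw [hx2, hyx]
        have h2 : (T - t) ^ 2 ≠ 0 := by positivity
        field_simp


lemma integral_identity {d : ℕ} (Q : EuclideanSpace ℝ (Fin d) → ℝ)
    (hQ : ContDiff ℝ (⊤ : ℕ∞) Q)
    (hgradint : Integrable (fun x : EuclideanSpace ℝ (Fin d) => ∑ i, pd Q i x ^ 2))
    (hxQint : Integrable (fun x : EuclideanSpace ℝ (Fin d) => ‖x‖ ^ 2 * Q x ^ 2))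
    {T t : ℝ} (h : 0 < T - t) :
    ∫ x : EuclideanSpace ℝ (Fin d), ∑ i, ‖pdC (STprof Q T t) i x‖ ^ 2
      = ((T - t) ^ 2)⁻¹ * (∫ x : EuclideanSpace ℝ (Fin d), ∑ i, pd Q i x ^ 2)
        + (1 / 4) * ∫ x : EuclideanSpace ℝ (Fin d), ‖x‖ ^ 2 * Q x ^ 2 := by
  set l := T - t with hl
  have hld : (l : ℝ) ^ d ≠ 0 := by positivity
  calc ∫ x : EuclideanSpace ℝ (Fin d), ∑ i, ‖pdC (STprof Q T t) i x‖ ^ 2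
      = ∫ x : EuclideanSpace ℝ (Fin d), (l ^ d)⁻¹ *
          ((l ^ 2)⁻¹ * (∑ i, pd Q i (l⁻¹ • x) ^ 2)
            + (1 / 4) * (‖l⁻¹ • x‖ ^ 2 * Q (l⁻¹ • x) ^ 2)) := by
        refine integral_congr_ae (Filter.Eventually.of_forall fun x => ?_)
        exact sum_abs_pdC Q hQ h x
    _ = (l ^ d)⁻¹ * ∫ x : EuclideanSpace ℝ (Fin d),
          (fun z : EuclideanSpace ℝ (Fin d) =>
            (l ^ 2)⁻¹ * (∑ i, pd Q i z ^ 2) + (1 / 4) * (‖z‖ ^ 2 * Q z ^ 2)) (l⁻¹ • x) :=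
        integral_const_mul _ _
    _ = (l ^ d)⁻¹ * (l ^ d * ∫ z : EuclideanSpace ℝ (Fin d),
          ((l ^ 2)⁻¹ * (∑ i, pd Q i z ^ 2) + (1 / 4) * (‖z‖ ^ 2 * Q z ^ 2))) := by
        rw [MeasureTheory.Measure.integral_comp_inv_smul volume
          (fun z : EuclideanSpace ℝ (Fin d) =>
            (l ^ 2)⁻¹ * (∑ i, pd Q i z ^ 2) + (1 / 4) * (‖z‖ ^ 2 * Q z ^ 2)) l,
          finrank_euclideanSpace_fin, _root_.abs_of_nonneg (pow_nonneg h.le _), smul_eq_mul]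
    _ = ∫ z : EuclideanSpace ℝ (Fin d),
          ((l ^ 2)⁻¹ * (∑ i, pd Q i z ^ 2) + (1 / 4) * (‖z‖ ^ 2 * Q z ^ 2)) := by
        rw [← mul_assoc, inv_mul_cancel₀ hld, one_mul]
    _ = _ := by
        rw [integral_add (hgradint.const_mul _) (hxQint.const_mul _),
          integral_const_mul, integral_const_mul]

/-- exact identity for the kinetic energy of the pseudo-conformal blow-up
solution, and the resulting `Ḣ¹` blow-up at speed `(T−t)⁻¹`. -/
theorem STprof_gradient_identity (d : ℕ) (hd : 1 ≤ d)
    (Q : EuclideanSpace ℝ (Fin d) → ℝ)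
    (hQsmooth : ContDiff ℝ (⊤ : ℕ∞) Q) (hQpos : ∀ x, 0 < Q x)
    (hQsol : ∀ x, lap Q x - Q x + Q x ^ ((1 : ℝ) + 4 / d) = 0)
    (hgradint : Integrable (fun x : EuclideanSpace ℝ (Fin d) => ∑ i, pd Q i x ^ 2))
    (hxQint : Integrable (fun x : EuclideanSpace ℝ (Fin d) => ‖x‖ ^ 2 * Q x ^ 2))
    (T : ℝ) :
    (∀ t < T,
      ∫ x : EuclideanSpace ℝ (Fin d), ∑ i, ‖pdC (STprof Q T t) i x‖ ^ 2
        = ((T - t) ^ 2)⁻¹ * (∫ x : EuclideanSpace ℝ (Fin d), ∑ i, pd Q i x ^ 2)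
          + (1 / 4) * ∫ x : EuclideanSpace ℝ (Fin d), ‖x‖ ^ 2 * Q x ^ 2) ∧
    Tendsto (fun t =>
        (T - t) ^ 2 *
          ∫ x : EuclideanSpace ℝ (Fin d), ∑ i, ‖pdC (STprof Q T t) i x‖ ^ 2)
      (𝓝[<] T) (𝓝 (∫ x : EuclideanSpace ℝ (Fin d), ∑ i, pd Q i x ^ 2)) := by
  have hpart1 : ∀ t < T,
      ∫ x : EuclideanSpace ℝ (Fin d), ∑ i, ‖pdC (STprof Q T t) i x‖ ^ 2
        = ((T - t) ^ 2)⁻¹ * (∫ x : EuclideanSpace ℝ (Fin d), ∑ i, pd Q i x ^ 2)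
          + (1 / 4) * ∫ x : EuclideanSpace ℝ (Fin d), ‖x‖ ^ 2 * Q x ^ 2 :=
    fun t ht => integral_identity Q hQsmooth hgradint hxQint (sub_pos.2 ht)
  refine ⟨hpart1, ?_⟩
  set J := ∫ x : EuclideanSpace ℝ (Fin d), ∑ i, pd Q i x ^ 2 with hJ
  set K := ∫ x : EuclideanSpace ℝ (Fin d), ‖x‖ ^ 2 * Q x ^ 2 with hK
  have hev : ∀ᶠ t in 𝓝[<] T,
      J + (T - t) ^ 2 * ((1 / 4) * K)
        = (T - t) ^ 2 *
            ∫ x : EuclideanSpace ℝ (Fin d), ∑ i, ‖pdC (STprof Q T t) i x‖ ^ 2 := by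
    filter_upwards [self_mem_nhdsWithin] with t ht
    rw [hpart1 t ht]
    have h0 : (T - t) ^ 2 ≠ 0 := by
      have := sub_pos.2 (Set.mem_Iio.1 ht); positivity
    rw [mul_add, ← mul_assoc ((T - t) ^ 2) ((T - t) ^ 2)⁻¹, mul_inv_cancel₀ h0, one_mul]
  have h1 : Tendsto (fun t : ℝ => (T - t)) (𝓝[<] T) (𝓝 0) := by
    have hc : Continuous (fun t : ℝ => T - t) := by continuity
    simpa using (hc.tendsto T).mono_left nhdsWithin_le_nhds
  have h2 : Tendsto (fun t : ℝ => J + (T - t) ^ 2 * ((1 / 4) * K)) (𝓝[<] T) (𝓝 (J + 0)) := by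
    refine tendsto_const_nhds.add ?_
    simpa using (h1.pow 2).mul_const ((1 / 4) * K)
  rw [add_zero] at h2
  exact h2.congr' hev
end
end

section
/- Let Q : ℝ^d → ℝ be a smooth, positive, radially symmetric function satisfying ΔQ(x) − Q(x) + Q(x)^{1+4/d} = 0 for all x ∈ ℝ^d and Q(x) → 0 as |x| → ∞. Then Q decays exponentially together with its derivatives up to order two: there exist C, δ > 0 such that |∂^ν Q(x)| ≤ C e^{−δ |x|} for every x ∈ ℝ^d and every multi-index ν with |ν| ≤ 2. -/
noncomputable section

open MeasureTheory Filter

open Real Set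

lemma hasFDerivAt_norm' {E : Type*} [NormedAddCommGroup E] [InnerProductSpace ℝ E]
    {x : E} (hx : x ≠ 0) :
    HasFDerivAt (fun y : E => ‖y‖) (‖x‖⁻¹ • innerSL ℝ x) x := by
  have hxn : (0:ℝ) < ‖x‖ := norm_pos_iff.2 hx
  have h1 : HasFDerivAt (fun y : E => ‖y‖^2) ((2:ℕ) • innerSL ℝ x) x :=
    (hasStrictFDerivAt_norm_sq x).hasFDerivAt
  have h2 : HasDerivAt Real.sqrt (1/(2*Real.sqrt (‖x‖^2))) (‖x‖^2) :=
    Real.hasDerivAt_sqrt (by positivity)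
  have h3 := h2.comp_hasFDerivAt x h1
  have h4 : (Real.sqrt ∘ fun y : E => ‖y‖^2) = fun y : E => ‖y‖ := by
    funext y; simp [Function.comp, Real.sqrt_sq (norm_nonneg y)]
  rw [h4] at h3
  refine h3.congr_fderiv ?_
  rw [Real.sqrt_sq (norm_nonneg x)]
  ext y
  simp only [ContinuousLinearMap.smul_apply, smul_eq_mul, ContinuousLinearMap.coe_smul',
    Pi.smul_apply, nsmul_eq_mul, Nat.cast_ofNat]
  field_simp

section Radial
variable {d : ℕ} {Q : EuclideanSpace ℝ (Fin d) → ℝ} {q : ℝ → ℝ}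


lemma radial_hasFDerivAt (hQ : ∀ x, Q x = q ‖x‖) (hq : ContDiff ℝ (⊤ : ℕ∞) q) {x : EuclideanSpace ℝ (Fin d)} (hx : x ≠ 0) :
    HasFDerivAt Q (deriv q ‖x‖ • (‖x‖⁻¹ • innerSL ℝ x)) x := by
  have hQ' : Q = fun y => q ‖y‖ := funext hQ
  rw [hQ']
  exact ((hq.differentiable (by simp) ‖x‖).hasDerivAt).comp_hasFDerivAt x (hasFDerivAt_norm' hx)

lemma radial_pd (hQ : ∀ x, Q x = q ‖x‖) (hq : ContDiff ℝ (⊤ : ℕ∞) q) {x : EuclideanSpace ℝ (Fin d)} (hx : x ≠ 0) (i : Fin d) :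
    pd Q i x = deriv q ‖x‖ * (‖x‖⁻¹ * x i) := by
  rw [pd, (radial_hasFDerivAt hQ hq hx).fderiv]
  simp [EuclideanSpace.inner_single_right, real_inner_comm]

end Radial

lemma radial_pd_pd {d : ℕ} {Q : EuclideanSpace ℝ (Fin d) → ℝ} {q : ℝ → ℝ}
    (hQ : ∀ x, Q x = q ‖x‖) (hq : ContDiff ℝ (⊤ : ℕ∞) q)
    {x : EuclideanSpace ℝ (Fin d)} (hx : x ≠ 0) (i j : Fin d) :
    pd (pd Q i) j x =
      deriv (deriv q) ‖x‖ * (‖x‖⁻¹ * x j) * (‖x‖⁻¹ * x i)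
      + deriv q ‖x‖ * ((if j = i then (1:ℝ) else 0) * ‖x‖⁻¹)
      - deriv q ‖x‖ * (x i * x j * ((‖x‖^2)⁻¹ * ‖x‖⁻¹)) := by
  have hxn : (0:ℝ) < ‖x‖ := norm_pos_iff.2 hx
  have hnorm := hasFDerivAt_norm' hx
  have hA : HasFDerivAt (fun y : EuclideanSpace ℝ (Fin d) => deriv q ‖y‖)
      (deriv (deriv q) ‖x‖ • (‖x‖⁻¹ • innerSL ℝ x)) x :=
    ((((contDiff_infty_iff_deriv.1 (hq.of_le (by simp))).2.differentiable
      (by simp)) ‖x‖).hasDerivAt).comp_hasFDerivAt x hnorm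
  have hB : HasFDerivAt (fun y : EuclideanSpace ℝ (Fin d) => ‖y‖⁻¹)
      ((-(‖x‖^2)⁻¹) • (‖x‖⁻¹ • innerSL ℝ x)) x :=
    (hasDerivAt_inv hxn.ne').comp_hasFDerivAt x hnorm
  have hC : HasFDerivAt (fun y : EuclideanSpace ℝ (Fin d) => y i)
      (innerSL ℝ (EuclideanSpace.single i 1)) x := by
    have h := (innerSL ℝ (EuclideanSpace.single i (1:ℝ))).hasFDerivAt (x := x)
    have he : (fun y : EuclideanSpace ℝ (Fin d) => y i)
        = fun y => innerSL ℝ (EuclideanSpace.single i (1:ℝ)) y := by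
      funext y; simp [EuclideanSpace.inner_single_left]
    rw [he]; exact h
  have hBC := hB.mul hC
  have hG := hA.mul hBC
  have hpdQ : pd Q i =ᶠ[nhds x] fun y => deriv q ‖y‖ * (‖y‖⁻¹ * y i) := by
    filter_upwards [IsOpen.mem_nhds isOpen_compl_singleton hx] with y hy
    exact radial_pd hQ hq hy i
  have hD := hG.congr_of_eventuallyEq hpdQ
  rw [pd, hD.fderiv]
  simp only [ContinuousLinearMap.add_apply, ContinuousLinearMap.smul_apply,
    ContinuousLinearMap.coe_smul', Pi.smul_apply, smul_eq_mul, innerSL_apply_apply, Pi.mul_apply,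
    EuclideanSpace.inner_single_left, EuclideanSpace.inner_single_right,
    EuclideanSpace.single_apply, map_one, one_mul, RCLike.star_def, conj_trivial]
  ring

lemma coord_abs_le_norm {d : ℕ} (x : EuclideanSpace ℝ (Fin d)) (i : Fin d) :
    |x i| ≤ ‖x‖ := by
  have h := abs_real_inner_le_norm (EuclideanSpace.single i (1:ℝ)) x
  simpa [EuclideanSpace.inner_single_left] using h

lemma radial_lap {d : ℕ} {Q : EuclideanSpace ℝ (Fin d) → ℝ} {q : ℝ → ℝ}
    (hQ : ∀ x, Q x = q ‖x‖) (hq : ContDiff ℝ (⊤ : ℕ∞) q)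
    {x : EuclideanSpace ℝ (Fin d)} (hx : x ≠ 0) :
    lap Q x = deriv (deriv q) ‖x‖ + ((d:ℝ) - 1) / ‖x‖ * deriv q ‖x‖ := by
  have hxn : (0:ℝ) < ‖x‖ := norm_pos_iff.2 hx
  have hsum : ∑ i, x i * x i = ‖x‖^2 := by
    rw [EuclideanSpace.norm_eq, Real.sq_sqrt (Finset.sum_nonneg fun i _ => by positivity)]
    exact Finset.sum_congr rfl fun i _ => by rw [Real.norm_eq_abs, sq_abs, sq]
  rw [lap]
  have h1 : ∑ i, pd (pd Q i) i x
      = ∑ i : Fin d, (deriv (deriv q) ‖x‖ * (‖x‖⁻¹ * ‖x‖⁻¹) * (x i * x i)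
          + deriv q ‖x‖ * ‖x‖⁻¹
          - deriv q ‖x‖ * ((‖x‖^2)⁻¹ * ‖x‖⁻¹) * (x i * x i)) := by
    refine Finset.sum_congr rfl fun i _ => ?_
    rw [radial_pd_pd hQ hq hx i i]
    simp
    ring
  rw [h1, Finset.sum_sub_distrib, Finset.sum_add_distrib]
  simp only [← Finset.mul_sum]
  rw [hsum, Finset.sum_const, Finset.card_univ, Fintype.card_fin, nsmul_eq_mul]
  field_simp
  ring

set_option maxHeartbeats 2000000 in
lemma ode_decay {d : ℕ} (hd : 1 ≤ d) {q : ℝ → ℝ} (hq : ContDiff ℝ (⊤ : ℕ∞) q)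
    (hpos : ∀ r, 0 < q r)
    (hODE : ∀ r : ℝ, 0 < r → deriv (deriv q) r + ((d:ℝ)-1)/r * deriv q r
        = q r - q r ^ ((1 : ℝ) + 4 / d))
    (htend : Tendsto q atTop (nhds 0)) :
    ∃ R : ℝ, 1 ≤ R ∧ ∃ C > (0:ℝ), ∀ r, R ≤ r →
      q r ≤ C * Real.exp (-(Real.sqrt 2)⁻¹ * r) ∧
      |deriv q r| ≤ C * Real.exp (-(Real.sqrt 2)⁻¹ * r) ∧
      |deriv (deriv q) r| ≤ C * Real.exp (-(Real.sqrt 2)⁻¹ * r) := by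
  -- basic differentiability facts
  have hqi : ContDiff ℝ (⊤ : ℕ∞) q := hq.of_le (by simp)
  obtain ⟨hq1, hq'c⟩ := contDiff_infty_iff_deriv.1 hqi
  obtain ⟨hq2, hq''c⟩ := contDiff_infty_iff_deriv.1 hq'c
  have hq''cont : Continuous (deriv (deriv q)) := hq''c.continuous
  set α : ℝ := (Real.sqrt 2)⁻¹ with hαdef
  have hα : 0 < α := by positivity
  have hα2 : α^2 = 1/2 := by
    rw [hαdef, inv_pow, Real.sq_sqrt (by norm_num : (0:ℝ) ≤ 2)]
    norm_num
  have hα1 : α ≤ 1 := by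
    rw [hαdef]
    rw [inv_le_one_iff₀]
    right
    nlinarith [Real.sq_sqrt (by norm_num : (0:ℝ) ≤ 2), Real.sqrt_nonneg 2]
  -- choose R
  set ε : ℝ := ((1:ℝ)/2) ^ ((d:ℝ)/4) with hεdef
  have hdne : (d:ℝ) ≠ 0 := Nat.cast_ne_zero.2 (by omega)
  have hε : 0 < ε := Real.rpow_pos_of_pos (by norm_num) _
  have hε1 : ε ≤ 1 := Real.rpow_le_one (by norm_num) (by norm_num) (by positivity)
  have hεpow : ε ^ ((4:ℝ)/d) = 1/2 := by
    rw [hεdef, ← Real.rpow_mul (by norm_num : (0:ℝ) ≤ 1/2)]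
    have h4 : (d:ℝ)/4*(4/d) = 1 := by field_simp
    rw [h4, Real.rpow_one]
  obtain ⟨R₀, hR₀⟩ := eventually_atTop.1 (htend.eventually (gt_mem_nhds hε))
  set R : ℝ := max R₀ 1 with hRdef
  have hR1 : (1:ℝ) ≤ R := le_max_right _ _
  have hsmall : ∀ r, R ≤ r → q r ≤ ε := fun r hr =>
    (hR₀ r ((le_max_left _ _).trans hr)).le
  have hRpos : (0:ℝ) < R := lt_of_lt_of_le one_pos hR1
  -- powers
  have hpow1 : ∀ r, R ≤ r → q r ^ ((1:ℝ)+4/d) ≤ q r := by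
    intro r hr
    have h4 : (0:ℝ) < 4/d := by positivity
    calc q r ^ ((1:ℝ)+4/d) ≤ q r ^ (1:ℝ) :=
          Real.rpow_le_rpow_of_exponent_ge (hpos r) ((hsmall r hr).trans hε1)
            (by linarith)
      _ = q r := Real.rpow_one _
  have hpowh : ∀ r, R ≤ r → q r ^ ((1:ℝ)+4/d) ≤ q r / 2 := by
    intro r hr
    have h1 : q r ^ ((1:ℝ)+4/d) = q r * q r ^ ((4:ℝ)/d) := by
      rw [Real.rpow_add (hpos r), Real.rpow_one]
    have h2 : q r ^ ((4:ℝ)/d) ≤ ε ^ ((4:ℝ)/d) :=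
      Real.rpow_le_rpow (hpos r).le (hsmall r hr) (by positivity)
    rw [h1]
    calc q r * q r ^ ((4:ℝ)/d) ≤ q r * (1/2) := by
            refine mul_le_mul_of_nonneg_left ?_ (hpos r).le
            rw [← hεpow]; exact h2
      _ = q r / 2 := by ring
  -- Step A : the derivative is nonpositive beyond R
  have hq'le : ∀ r, R ≤ r → deriv q r ≤ 0 := by
    by_contra hcon
    push_neg at hcon
    obtain ⟨r₀, hr₀R, hr₀⟩ := hcon
    set m : ℕ := d - 1 with hmdef
    have hmcast : ((m:ℕ):ℝ) = (d:ℝ) - 1 := by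
      rw [hmdef, Nat.cast_sub hd]; norm_num
    set p : ℝ → ℝ := fun r => r^m * deriv q r with hpdef
    have hr₀pos : 0 < r₀ := lt_of_lt_of_le hRpos hr₀R
    have hpd : ∀ r, 0 < r → R ≤ r →
        HasDerivAt p (r^m * (q r - q r ^ ((1:ℝ)+4/d))) r := by
      intro r hrpos hrR
      have h1 : HasDerivAt (fun s : ℝ => s^m) ((m:ℝ) * r^(m-1)) r := by
        simpa using hasDerivAt_pow m r
      have h2 : HasDerivAt (deriv q) (deriv (deriv q) r) r := (hq2 r).hasDerivAt
      have h3 := h1.mul h2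
      have hm' : (m:ℝ) * r^(m-1) = r^m * (((d:ℝ)-1)/r) := by
        rw [← hmcast]
        rcases m with _ | k
        · simp
        · rw [Nat.add_sub_cancel, pow_succ]
          field_simp
      refine h3.congr_deriv ?_
      rw [hm', ← hODE r hrpos]
      ring
    have hpc : Continuous p := (continuous_pow m).mul hq'c.continuous
    have hpmono : MonotoneOn p (Ici r₀) := by
      apply monotoneOn_of_deriv_nonneg (convex_Ici r₀) hpc.continuousOn
      · intro s hs
        rw [interior_Ici] at hs
        have hsR : R ≤ s := hr₀R.trans (le_of_lt hs)
        exact ((hpd s (hRpos.trans_le hsR) hsR).differentiableAt).differentiableWithinAt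
      · intro s hs
        rw [interior_Ici] at hs
        have hsR : R ≤ s := hr₀R.trans (le_of_lt hs)
        have hspos : 0 < s := hRpos.trans_le hsR
        rw [(hpd s hspos hsR).deriv]
        exact mul_nonneg (pow_nonneg hspos.le m) (sub_nonneg.2 (hpow1 s hsR))
    have hq'pos : ∀ s, r₀ ≤ s → 0 ≤ deriv q s := by
      intro s hs
      have hp : p r₀ ≤ p s := hpmono self_mem_Ici hs hs
      have hpr₀ : 0 < p r₀ := mul_pos (pow_pos hr₀pos m) hr₀
      have hspos : 0 < s := hr₀pos.trans_le hs
      have h5 : 0 < s^m * deriv q s := hpr₀.trans_le hp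
      nlinarith [pow_pos hspos m]
    have hqmono2 : MonotoneOn q (Ici r₀) :=
      monotoneOn_of_deriv_nonneg (convex_Ici r₀) hq1.continuous.continuousOn
        hq1.differentiableOn
        (fun s hs => hq'pos s (le_of_lt (by rwa [interior_Ici] at hs)))
    have hle : q r₀ ≤ 0 :=
      ge_of_tendsto htend (eventually_atTop.2
        ⟨r₀, fun s hs => hqmono2 self_mem_Ici hs hs⟩)
    exact absurd hle (not_le.2 (hpos r₀))
    -- Step B : q'' ≥ q/2 on [R,∞)
  have hq''ge : ∀ r, R ≤ r → q r / 2 ≤ deriv (deriv q) r := by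
    intro r hr
    have hrpos : 0 < r := hRpos.trans_le hr
    have hODEr := hODE r hrpos
    have hd1 : (1:ℝ) ≤ (d:ℝ) := by exact_mod_cast hd
    have h1 : ((d:ℝ)-1)/r * deriv q r ≤ 0 := by
      apply mul_nonpos_of_nonneg_of_nonpos ?_ (hq'le r hr)
      exact div_nonneg (by linarith) hrpos.le
    have h2 := hpowh r hr
    linarith
  -- Step C : q antitone on [R,∞)
  have hqanti : AntitoneOn q (Ici R) :=
    antitoneOn_of_deriv_nonpos (convex_Ici R) hq1.continuous.continuousOn
      hq1.differentiableOn
      (fun s hs => hq'le s (le_of_lt (by rwa [interior_Ici] at hs)))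
  -- Step D : q' + α q ≤ 0 on [R,∞)
  have hw : ∀ r, R ≤ r → deriv q r + α * q r ≤ 0 := by
    by_contra hcon
    push_neg at hcon
    obtain ⟨r₀, hr₀R, hr₀⟩ := hcon
    set g : ℝ → ℝ := fun r => (deriv q r + α * q r) * Real.exp (-(α*r)) with hgdef
    have hgd : ∀ r, HasDerivAt g
        ((deriv (deriv q) r + α * deriv q r) * Real.exp (-(α*r))
          + (deriv q r + α * q r) * (Real.exp (-(α*r)) * (-α))) r := by
      intro r
      have h1 : HasDerivAt (fun s => deriv q s + α * q s)
          (deriv (deriv q) r + α * deriv q r) r :=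
        ((hq2 r).hasDerivAt).add (((hq1 r).hasDerivAt).const_mul α)
      have h3 : HasDerivAt (fun s : ℝ => -(α*s)) (-α) r := by
        have h := ((hasDerivAt_id r).const_mul α).neg
        rw [mul_one] at h
        exact h
      exact h1.mul h3.exp
    have hgc : Continuous g := by
      apply Continuous.mul
      · exact hq'c.continuous.add (continuous_const.mul hq1.continuous)
      · exact Real.continuous_exp.comp (continuous_const.mul continuous_id).neg
    have hgmono : MonotoneOn g (Ici r₀) := by
      apply monotoneOn_of_deriv_nonneg (convex_Ici r₀) hgc.continuousOn
      · intro s hs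
        exact (hgd s).differentiableAt.differentiableWithinAt
      · intro s hs
        rw [interior_Ici] at hs
        have hsR : R ≤ s := hr₀R.trans (le_of_lt hs)
        rw [(hgd s).deriv]
        have he : (deriv (deriv q) s + α * deriv q s) * Real.exp (-(α*s))
            + (deriv q s + α * q s) * (Real.exp (-(α*s)) * (-α))
            = Real.exp (-(α*s)) * (deriv (deriv q) s - α^2 * q s) := by ring
        rw [he, hα2]
        have h5 := hq''ge s hsR
        have h6 := (Real.exp_pos (-(α*s))).le
        nlinarith
    have hg0 : 0 < g r₀ := mul_pos hr₀ (Real.exp_pos _)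
    have hwub : ∀ r, R ≤ r → deriv q r + α * q r ≤ α * q R := by
      intro r hr
      have h5 := hqanti self_mem_Ici hr hr
      have h6 := hq'le r hr
      nlinarith
    have htendexp : Tendsto (fun r => g r₀ * Real.exp (α * r)) atTop atTop := by
      apply Tendsto.const_mul_atTop hg0
      exact Real.tendsto_exp_atTop.comp (Tendsto.const_mul_atTop hα tendsto_id)
    obtain ⟨r₁, h7, h8⟩ :=
      ((htendexp.eventually_gt_atTop (α * q R)).and (eventually_ge_atTop r₀)).exists
    have h9 : g r₀ ≤ g r₁ := hgmono self_mem_Ici h8 h8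
    have h10 : deriv q r₁ + α * q r₁ = g r₁ * Real.exp (α * r₁) := by
      rw [hgdef]
      rw [mul_assoc, ← Real.exp_add]
      norm_num
    have h11 : R ≤ r₁ := hr₀R.trans h8
    have h12 : g r₀ * Real.exp (α * r₁) ≤ g r₁ * Real.exp (α * r₁) :=
      mul_le_mul_of_nonneg_right h9 (Real.exp_pos _).le
    have h13 := hwub r₁ h11
    rw [h10] at h13
    linarith
  -- Step E : exponential decay of q
  set C₀ : ℝ := q R * Real.exp (α * R) with hC₀def
  have hC₀ : 0 < C₀ := mul_pos (hpos R) (Real.exp_pos _)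
  have hqdec : ∀ r, R ≤ r → q r ≤ C₀ * Real.exp (-α * r) := by
    set h : ℝ → ℝ := fun r => q r * Real.exp (α * r) with hhdef
    have hhd : ∀ r, HasDerivAt h ((deriv q r + α * q r) * Real.exp (α * r)) r := by
      intro r
      have h3 : HasDerivAt (fun s : ℝ => α*s) α r := by
        simpa using (hasDerivAt_id r).const_mul α
      have h1 := ((hq1 r).hasDerivAt).mul h3.exp
      refine h1.congr_deriv ?_
      ring
    have hhc : Continuous h :=
      hq1.continuous.mul (Real.continuous_exp.comp (continuous_const.mul continuous_id))
    have hhanti : AntitoneOn h (Ici R) := by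
      apply antitoneOn_of_deriv_nonpos (convex_Ici R) hhc.continuousOn
      · intro s hs
        exact (hhd s).differentiableAt.differentiableWithinAt
      · intro s hs
        rw [interior_Ici] at hs
        rw [(hhd s).deriv]
        have h5 := hw s (le_of_lt hs)
        have h6 := (Real.exp_pos (α * s)).le
        nlinarith
    intro r hr
    have h7 := hhanti self_mem_Ici hr hr
    have heq : q r = h r * Real.exp (-α * r) := by
      rw [hhdef]
      rw [mul_assoc, ← Real.exp_add]
      norm_num
    rw [heq, hC₀def]
    calc h r * Real.exp (-α*r) ≤ h R * Real.exp (-α*r) :=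
          mul_le_mul_of_nonneg_right h7 (Real.exp_pos _).le
      _ = q R * Real.exp (α*R) * Real.exp (-α*r) := rfl
  -- Step F : q' monotone on [R,∞)
  have hq'mono : MonotoneOn (deriv q) (Ici R) := by
    apply monotoneOn_of_deriv_nonneg (convex_Ici R) hq'c.continuous.continuousOn
      hq2.differentiableOn
    intro s hs
    rw [interior_Ici] at hs
    have h5 := hq''ge s (le_of_lt hs)
    have h6 := (hpos s).le
    linarith
  -- Step G : bound on q' for r ≥ R+1
  set C₁ : ℝ := C₀ * Real.exp α with hC₁def
  have hC₁ : 0 < C₁ := mul_pos hC₀ (Real.exp_pos _)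
  have hq'bound : ∀ r, R + 1 ≤ r → |deriv q r| ≤ C₁ * Real.exp (-α * r) := by
    intro r hr
    have hrR : R ≤ r := by linarith
    have hr1R : R ≤ r - 1 := by linarith
    obtain ⟨ξ, hξmem, hξ⟩ := exists_hasDerivAt_eq_slope q (deriv q) (by linarith : r - 1 < r)
      hq1.continuous.continuousOn (fun s _ => (hq1 s).hasDerivAt)
    have hξR : R ≤ ξ := by have := hξmem.1; linarith
    have h1 : deriv q ξ ≤ deriv q r := hq'mono (mem_Ici.2 hξR) (mem_Ici.2 hrR) hξmem.2.le
    have h2 : deriv q ξ = q r - q (r - 1) := by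
      rw [hξ]
      norm_num
    have h3 : -(q (r-1)) ≤ deriv q r := by
      have h4 := hpos r
      rw [h2] at h1
      linarith
    have h4 : q (r-1) ≤ C₀ * Real.exp (-α * (r-1)) := hqdec _ hr1R
    have h5 : |deriv q r| ≤ q (r - 1) := by
      rw [abs_of_nonpos (hq'le r hrR)]
      linarith
    calc |deriv q r| ≤ q (r-1) := h5
      _ ≤ C₀ * Real.exp (-α * (r-1)) := h4
      _ = C₁ * Real.exp (-α*r) := by
          have he : Real.exp (-α * (r-1)) = Real.exp α * Real.exp (-α*r) := by
            rw [← Real.exp_add]; ring_nf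
          rw [he, hC₁def]; ring
  -- Step H : bound on q''
  set C₂ : ℝ := C₀ + d*C₁ with hC₂def
  have hq''bound : ∀ r, R + 1 ≤ r → |deriv (deriv q) r| ≤ C₂ * Real.exp (-α*r) := by
    intro r hr
    have hrR : R ≤ r := by linarith
    have hrpos : 0 < r := hRpos.trans_le hrR
    have hr1 : (1:ℝ) ≤ r := hR1.trans hrR
    have hODEr := hODE r hrpos
    have h0 : 0 ≤ q r ^ ((1:ℝ)+4/d) := Real.rpow_nonneg (hpos r).le _
    have h1 := hpow1 r hrR
    have hd1 : (1:ℝ) ≤ (d:ℝ) := by exact_mod_cast hd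
    have h2 : |((d:ℝ)-1)/r * deriv q r| ≤ (d:ℝ) * |deriv q r| := by
      rw [abs_mul]
      apply mul_le_mul_of_nonneg_right ?_ (abs_nonneg _)
      rw [abs_div, abs_of_nonneg (by linarith : (0:ℝ) ≤ (d:ℝ)-1),
        abs_of_pos hrpos, div_le_iff₀ hrpos]
      have h2a : (d:ℝ) ≤ (d:ℝ)*r := le_mul_of_one_le_right (by linarith) hr1
      linarith
    have h3 := hq'bound r hr
    have h4 := hqdec r hrR
    have h5 := abs_le.1 h2
    have h7 := (hpos r).le
    have h8 : (d:ℝ) * |deriv q r| ≤ (d:ℝ) * (C₁ * Real.exp (-α*r)) :=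
      mul_le_mul_of_nonneg_left h3 (by linarith)
    have h11 : (0:ℝ) ≤ C₀ * Real.exp (-α*r) := by positivity
    have hexpand : (C₀ + (d:ℝ)*C₁) * Real.exp (-α*r)
        = C₀ * Real.exp (-α*r) + (d:ℝ)*(C₁ * Real.exp (-α*r)) := by ring
    rw [hC₂def, abs_le, hexpand]
    have habs := abs_nonneg (deriv q r)
    constructor
    · linarith
    · linarith
  -- assemble
  refine ⟨R+1, by linarith, max C₀ (max C₁ C₂), lt_of_lt_of_le hC₀ (le_max_left _ _), ?_⟩
  intro r hr
  have hrR : R ≤ r := by linarith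
  have hexp := (Real.exp_pos (-α*r)).le
  refine ⟨?_, ?_, ?_⟩
  · exact (hqdec r hrR).trans (mul_le_mul_of_nonneg_right (le_max_left _ _) hexp)
  · exact (hq'bound r hr).trans (mul_le_mul_of_nonneg_right
      ((le_max_left _ _).trans (le_max_right _ _)) hexp)
  · exact (hq''bound r hr).trans (mul_le_mul_of_nonneg_right
      ((le_max_right _ _).trans (le_max_right _ _)) hexp)

set_option maxHeartbeats 2000000 in
/-- the ground state decays exponentially together with its derivatives
up to order two. -/
theorem groundState_exponential_decay (d : ℕ) (hd : 1 ≤ d)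
    (Q : EuclideanSpace ℝ (Fin d) → ℝ)
    (hQsmooth : ContDiff ℝ (⊤ : ℕ∞) Q) (hQpos : ∀ x, 0 < Q x)
    (hQradial : ∀ x y : EuclideanSpace ℝ (Fin d), ‖x‖ = ‖y‖ → Q x = Q y)
    (hQsol : ∀ x, lap Q x - Q x + Q x ^ ((1 : ℝ) + 4 / d) = 0)
    (hQvanish : Tendsto Q (cocompact (EuclideanSpace ℝ (Fin d))) (nhds 0)) :
    ∃ C > (0 : ℝ), ∃ δ > (0 : ℝ), ∀ x : EuclideanSpace ℝ (Fin d),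
      |Q x| ≤ C * Real.exp (-δ * ‖x‖) ∧
      (∀ i, |pd Q i x| ≤ C * Real.exp (-δ * ‖x‖)) ∧
      (∀ i j, |pd (pd Q i) j x| ≤ C * Real.exp (-δ * ‖x‖)) := by
  classical
  set i0 : Fin d := ⟨0, by omega⟩ with hi0
  set e0 : EuclideanSpace ℝ (Fin d) := EuclideanSpace.single i0 1 with he0
  have he0n : ‖e0‖ = 1 := by rw [he0, EuclideanSpace.norm_single]; norm_num
  set q : ℝ → ℝ := fun r => Q (r • e0) with hqdef
  have hQq : ∀ x, Q x = q ‖x‖ := by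
    intro x
    apply hQradial
    rw [norm_smul, he0n, mul_one, Real.norm_eq_abs, abs_norm]
  have hqsm : ContDiff ℝ (⊤ : ℕ∞) q := hQsmooth.comp (contDiff_id.smul contDiff_const)
  have hqpos : ∀ r, 0 < q r := fun r => hQpos _
  have hnsmul : ∀ r : ℝ, 0 < r → ‖(r • e0 : EuclideanSpace ℝ (Fin d))‖ = r := by
    intro r hr
    rw [norm_smul, he0n, mul_one, Real.norm_eq_abs, abs_of_pos hr]
  have hODE : ∀ r : ℝ, 0 < r → deriv (deriv q) r + ((d:ℝ)-1)/r * deriv q r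
      = q r - q r ^ ((1:ℝ)+4/d) := by
    intro r hr
    have hn : ‖(r • e0 : EuclideanSpace ℝ (Fin d))‖ = r := hnsmul r hr
    have hxne : (r • e0 : EuclideanSpace ℝ (Fin d)) ≠ 0 := by
      rw [← norm_pos_iff, hn]; exact hr
    have hsol := hQsol (r • e0)
    rw [radial_lap hQq hqsm hxne, hQq (r • e0), hn] at hsol
    linarith
  have htend : Tendsto q atTop (nhds 0) := by
    apply hQvanish.comp
    apply tendsto_cocompact_of_tendsto_dist_comp_atTop (0 : EuclideanSpace ℝ (Fin d))
    have heq : ∀ r : ℝ, dist (r • e0) (0 : EuclideanSpace ℝ (Fin d)) = |r| := by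
      intro r
      rw [dist_zero_right, norm_smul, he0n, mul_one, Real.norm_eq_abs]
    simp only [heq]
    exact tendsto_abs_atTop_atTop
  obtain ⟨R, hR1, A, hA, hbound⟩ := ode_decay hd hqsm hqpos hODE htend
  set α : ℝ := (Real.sqrt 2)⁻¹ with hαdef
  have hαpos : 0 < α := by positivity
  have hRpos : (0:ℝ) < R := lt_of_lt_of_le one_pos hR1
  -- smoothness of derivatives
  have hQ1 : ContDiff ℝ (⊤:ℕ∞) Q := hQsmooth.of_le (by simp)
  have hfd : ContDiff ℝ (⊤:ℕ∞) (fun x => fderiv ℝ Q x) := (contDiff_infty_iff_fderiv.1 hQ1).2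
  have hpdsm : ∀ i, ContDiff ℝ (⊤:ℕ∞) (pd Q i) := by
    intro i
    exact (ContinuousLinearMap.apply ℝ ℝ (EuclideanSpace.single i 1)).contDiff.comp hfd
  have hcont2 : ∀ i, Continuous (fun x => fderiv ℝ (pd Q i) x) :=
    fun i => ((contDiff_infty_iff_fderiv.1 (hpdsm i)).2).continuous
  -- bound on the compact ball of radius R
  set H : EuclideanSpace ℝ (Fin d) → ℝ :=
    fun x => |Q x| + ‖fderiv ℝ Q x‖ + ∑ i, ‖fderiv ℝ (pd Q i) x‖ with hHdef
  have hHc : Continuous H := by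
    refine ((hQsmooth.continuous.abs.add hfd.continuous.norm).add ?_)
    exact continuous_finset_sum _ (fun i _ => (hcont2 i).norm)
  obtain ⟨z, hzK, hzmax⟩ := (isCompact_closedBall (0:EuclideanSpace ℝ (Fin d)) R).exists_isMaxOn
    ⟨0, by simp [Metric.mem_closedBall, hRpos.le]⟩ hHc.continuousOn
  set M : ℝ := H z with hMdef
  have hHnonneg : ∀ x, 0 ≤ H x := by
    intro x
    apply add_nonneg (add_nonneg (abs_nonneg _) (norm_nonneg _))
    exact Finset.sum_nonneg fun i _ => norm_nonneg _
  have hM0 : 0 ≤ M := hHnonneg z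
  -- bounds of pd by H
  have hpd_le_H : ∀ x i, |pd Q i x| ≤ H x := by
    intro x i
    have h1 : |pd Q i x| ≤ ‖fderiv ℝ Q x‖ := by
      have := (fderiv ℝ Q x).le_opNorm (EuclideanSpace.single i 1)
      rw [EuclideanSpace.norm_single, norm_one, mul_one] at this
      exact le_trans (le_of_eq rfl) this
    have h2 : (0:ℝ) ≤ ∑ i, ‖fderiv ℝ (pd Q i) x‖ :=
      Finset.sum_nonneg fun i _ => norm_nonneg _
    have h3 := abs_nonneg (Q x)
    rw [hHdef]
    dsimp only
    linarith
  have hpdpd_le_H : ∀ x i j, |pd (pd Q i) j x| ≤ H x := by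
    intro x i j
    have h1 : |pd (pd Q i) j x| ≤ ‖fderiv ℝ (pd Q i) x‖ := by
      have := (fderiv ℝ (pd Q i) x).le_opNorm (EuclideanSpace.single j 1)
      rw [EuclideanSpace.norm_single, norm_one, mul_one] at this
      exact this
    have h2 : ‖fderiv ℝ (pd Q i) x‖ ≤ ∑ k, ‖fderiv ℝ (pd Q k) x‖ :=
      Finset.single_le_sum (f := fun k => ‖fderiv ℝ (pd Q k) x‖)
        (fun k _ => norm_nonneg _) (Finset.mem_univ i)
    have h3 := abs_nonneg (Q x)
    have h4 := norm_nonneg (fderiv ℝ Q x)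
    rw [hHdef]
    dsimp only
    linarith
  -- final constant
  refine ⟨max (3*A) (M * Real.exp (α * R)), lt_of_lt_of_le (by linarith) (le_max_left _ _),
    α, hαpos, ?_⟩
  intro x
  by_cases hx : ‖x‖ ≤ R
  · -- compact regime
    have hxK : x ∈ Metric.closedBall (0:EuclideanSpace ℝ (Fin d)) R := by
      simpa [Metric.mem_closedBall, dist_zero_right] using hx
    have hHx : H x ≤ M := hzmax hxK
    have hexp1 : (1:ℝ) ≤ Real.exp (α * R) * Real.exp (-α * ‖x‖) := by
      rw [← Real.exp_add]
      have h5 : (0:ℝ) ≤ α * R + -α * ‖x‖ := by nlinarith [norm_nonneg x]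
      calc (1:ℝ) = Real.exp 0 := by simp
        _ ≤ _ := Real.exp_le_exp.2 h5
    have hkey : ∀ t : ℝ, t ≤ H x →
        t ≤ max (3*A) (M * Real.exp (α * R)) * Real.exp (-α * ‖x‖) := by
      intro t ht
      have h6 : t ≤ M := le_trans ht hHx
      have h7 : M ≤ M * (Real.exp (α * R) * Real.exp (-α * ‖x‖)) :=
        le_mul_of_one_le_right hM0 hexp1
      have h8 : M * (Real.exp (α * R) * Real.exp (-α * ‖x‖))
          ≤ max (3*A) (M * Real.exp (α * R)) * Real.exp (-α * ‖x‖) := by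
        rw [← mul_assoc]
        exact mul_le_mul_of_nonneg_right (le_max_right _ _) (Real.exp_pos _).le
      linarith
    refine ⟨?_, fun i => ?_, fun i j => ?_⟩
    · apply hkey
      have h2 : (0:ℝ) ≤ ∑ i, ‖fderiv ℝ (pd Q i) x‖ :=
        Finset.sum_nonneg fun i _ => norm_nonneg _
      have h4 := norm_nonneg (fderiv ℝ Q x)
      rw [hHdef]; dsimp only; linarith
    · exact hkey _ (hpd_le_H x i)
    · exact hkey _ (hpdpd_le_H x i j)
  · -- decay regime
    push_neg at hx
    have hxR : R ≤ ‖x‖ := hx.le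
    have hr1 : (1:ℝ) ≤ ‖x‖ := hR1.trans hxR
    have hrpos : (0:ℝ) < ‖x‖ := lt_of_lt_of_le one_pos hr1
    have hxne : x ≠ 0 := by
      rw [← norm_pos_iff]; exact hrpos
    obtain ⟨hb0, hb1, hb2⟩ := hbound ‖x‖ hxR
    have hexp := (Real.exp_pos (-α * ‖x‖)).le
    have hmax : A * Real.exp (-α * ‖x‖) ≤ max (3*A) (M * Real.exp (α * R)) * Real.exp (-α * ‖x‖) := by
      apply mul_le_mul_of_nonneg_right ?_ hexp
      exact le_trans (by linarith) (le_max_left _ _)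
    have hmax3 : 3*A * Real.exp (-α * ‖x‖)
        ≤ max (3*A) (M * Real.exp (α * R)) * Real.exp (-α * ‖x‖) :=
      mul_le_mul_of_nonneg_right (le_max_left _ _) hexp
    have hcoord : ∀ i : Fin d, |‖x‖⁻¹ * x i| ≤ 1 := by
      intro i
      rw [abs_mul, abs_inv, abs_norm]
      rw [inv_mul_le_iff₀ hrpos, mul_one]
      exact coord_abs_le_norm x i
    refine ⟨?_, fun i => ?_, fun i j => ?_⟩
    · rw [hQq x, abs_of_pos (hqpos ‖x‖)]
      exact le_trans hb0 hmax
    · rw [radial_pd hQq hqsm hxne i, abs_mul]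
      calc |deriv q ‖x‖| * |‖x‖⁻¹ * x i| ≤ |deriv q ‖x‖| * 1 :=
            mul_le_mul_of_nonneg_left (hcoord i) (abs_nonneg _)
        _ = |deriv q ‖x‖| := mul_one _
        _ ≤ A * Real.exp (-α * ‖x‖) := hb1
        _ ≤ _ := hmax
    · rw [radial_pd_pd hQq hqsm hxne i j]
      have e1 : |deriv (deriv q) ‖x‖ * (‖x‖⁻¹ * x j) * (‖x‖⁻¹ * x i)|
          ≤ |deriv (deriv q) ‖x‖| := by
        rw [abs_mul, abs_mul]
        calc |deriv (deriv q) ‖x‖| * |‖x‖⁻¹ * x j| * |‖x‖⁻¹ * x i|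
            ≤ |deriv (deriv q) ‖x‖| * 1 * 1 := by
              apply mul_le_mul ?_ (hcoord i) (abs_nonneg _) ?_
              · exact mul_le_mul_of_nonneg_left (hcoord j) (abs_nonneg _)
              · positivity
          _ = |deriv (deriv q) ‖x‖| := by ring
      have e2 : |deriv q ‖x‖ * ((if j = i then (1:ℝ) else 0) * ‖x‖⁻¹)| ≤ |deriv q ‖x‖| := by
        rw [abs_mul]
        apply mul_le_mul_of_nonneg_left ?_ (abs_nonneg _) |>.trans (le_of_eq (mul_one _))
        rw [abs_mul]
        have hinv : |‖x‖⁻¹| ≤ 1 := by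
          rw [abs_inv, abs_norm]
          exact inv_le_one_of_one_le₀ hr1
        have : |if j = i then (1:ℝ) else 0| ≤ 1 := by
          split <;> simp
        calc |if j = i then (1:ℝ) else 0| * |‖x‖⁻¹| ≤ 1 * 1 :=
              mul_le_mul this hinv (abs_nonneg _) zero_le_one
          _ = 1 := by norm_num
      have e3 : |deriv q ‖x‖ * (x i * x j * ((‖x‖^2)⁻¹ * ‖x‖⁻¹))| ≤ |deriv q ‖x‖| := by
        rw [abs_mul]
        apply mul_le_mul_of_nonneg_left ?_ (abs_nonneg _) |>.trans (le_of_eq (mul_one _))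
        have heq : x i * x j * ((‖x‖^2)⁻¹ * ‖x‖⁻¹)
            = (‖x‖⁻¹ * x i) * (‖x‖⁻¹ * x j) * ‖x‖⁻¹ := by
          rw [sq, mul_inv]
          ring
        rw [heq, abs_mul, abs_mul]
        have hinv : |‖x‖⁻¹| ≤ 1 := by
          rw [abs_inv, abs_norm]
          exact inv_le_one_of_one_le₀ hr1
        have h1 := hcoord i
        have h2 := hcoord j
        have ha := abs_nonneg (‖x‖⁻¹ * x i)
        have hb := abs_nonneg (‖x‖⁻¹ * x j)
        have hc := abs_nonneg (‖x‖⁻¹ : ℝ)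
        nlinarith [mul_nonneg ha hb, mul_le_one₀ h1 hb h2,
          mul_le_one₀ (mul_le_one₀ h1 hb h2) hc hinv]
      have htri : |deriv (deriv q) ‖x‖ * (‖x‖⁻¹ * x j) * (‖x‖⁻¹ * x i)
          + deriv q ‖x‖ * ((if j = i then (1:ℝ) else 0) * ‖x‖⁻¹)
          - deriv q ‖x‖ * (x i * x j * ((‖x‖^2)⁻¹ * ‖x‖⁻¹))|
          ≤ |deriv (deriv q) ‖x‖| + 2 * |deriv q ‖x‖| := by
        have := abs_sub (deriv (deriv q) ‖x‖ * (‖x‖⁻¹ * x j) * (‖x‖⁻¹ * x i)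
          + deriv q ‖x‖ * ((if j = i then (1:ℝ) else 0) * ‖x‖⁻¹))
          (deriv q ‖x‖ * (x i * x j * ((‖x‖^2)⁻¹ * ‖x‖⁻¹)))
        have h9 := abs_add_le (deriv (deriv q) ‖x‖ * (‖x‖⁻¹ * x j) * (‖x‖⁻¹ * x i))
          (deriv q ‖x‖ * ((if j = i then (1:ℝ) else 0) * ‖x‖⁻¹))
        linarith
      calc _ ≤ |deriv (deriv q) ‖x‖| + 2 * |deriv q ‖x‖| := htri
        _ ≤ A * Real.exp (-α * ‖x‖) + 2 * (A * Real.exp (-α * ‖x‖)) := by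
            have := hb1
            have := hb2
            linarith
        _ = 3*A * Real.exp (-α * ‖x‖) := by ring
        _ ≤ _ := hmax3
end
end
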